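/- arXiv:0710.4221 — 2 statements merged into one kernel-verified Lean document; each statement's English description precedes it below -/
import Mathlib

section
/- The revised rigid body vector field (8) decomposes as X(x) = P(x)∇h(x) + g(x)∇c(x), where P is the standard Lie–Poisson tensor on ℝ³, h = ½(a₁(x¹)² + a₂(x²)² + a₃(x³)²), c = ½|x|², and g has off-diagonal entries gⁱʲ = ∂ᵢh·∂ⱼh (i ≠ j) and diagonal entries gⁱⁱ = −Σ_{k≠i} (∂ₖh)². -/
theorem revised_rigid_body_metriplectic_decomposition (a₁ a₂ a₃ : ℝ) (x : Fin 3 → ℝ) :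
    let P : Matrix (Fin 3) (Fin 3) ℝ :=
      !![0, x 2, -(x 1); -(x 2), 0, x 0; x 1, -(x 0), 0]
    let gradh : Fin 3 → ℝ := ![a₁ * x 0, a₂ * x 1, a₃ * x 2]
    let gradc : Fin 3 → ℝ := ![x 0, x 1, x 2]
    let g : Matrix (Fin 3) (Fin 3) ℝ :=
      Matrix.of fun i j =>
        if i = j then -(∑ k ∈ Finset.univ.filter (· ≠ i), (gradh k)^2)
        else gradh i * gradh j
    P.mulVec gradh + g.mulVec gradc =
      ![(a₂ - a₃) * x 1 * x 2 + a₂ * (a₁ - a₂) * x 0 * (x 1)^2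
          + a₃ * (a₁ - a₃) * x 0 * (x 2)^2,
        (a₃ - a₁) * x 0 * x 2 + a₃ * (a₂ - a₃) * x 1 * (x 2)^2
          + a₁ * (a₂ - a₁) * x 1 * (x 0)^2,
        (a₁ - a₂) * x 0 * x 1 + a₁ * (a₃ - a₁) * x 2 * (x 0)^2
          + a₂ * (a₃ - a₂) * x 2 * (x 1)^2] := by
  intro P gradh gradc g
  funext i
  fin_cases i <;>
    simp [P, g, gradh, gradc, Matrix.mulVec, dotProduct, Fin.sum_univ_three,
      Finset.sum_filter, Fin.sum_univ_succ, Matrix.vecHead, Matrix.vecTail, Fin.ext_iff] <;> ring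
end

section
/- The Jacobian of the revised rigid body vector field (8) at the equilibrium (m,0,0) has characteristic polynomial λ(λ² − a₁(a₂+a₃−2a₁)m²λ + (a₁−a₃)(a₁−a₂)m²(a₁²m²+1)). -/
/-!
Every term of `X¹` is at least quadratic in `(x², x³)`, so the first row of the Jacobian at
`(m, 0, 0)` vanishes and the factor `λ` splits off. What remains is `λ² - (tr B) λ + det B` for
the lower block `B = [[a₁(a₂-a₁)m², (a₃-a₁)m], [(a₁-a₂)m, a₁(a₃-a₁)m²]]`, and
`det B = (a₁-a₂)(a₁-a₃)m²(a₁²m² + 1)`.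
-/

open Matrix

theorem fderiv_apply_single_eq_deriv_update {𝕜 ι F : Type*} [NontriviallyNormedField 𝕜]
    [Fintype ι] [DecidableEq ι] [NormedAddCommGroup F] [NormedSpace 𝕜 F]
    {f : (ι → 𝕜) → F} {x : ι → 𝕜} (hf : DifferentiableAt 𝕜 f x) (i : ι) :
    fderiv 𝕜 f x (Pi.single i 1) = deriv (fun t => f (Function.update x i t)) (x i) := by
  have hf' : HasFDerivAt f (fderiv 𝕜 f x) (Function.update x i (x i)) := by
    rw [Function.update_eq_self]
    exact hf.hasFDerivAt
  exact (hf'.comp_hasDerivAt (x i) (hasDerivAt_update x i (x i))).deriv.symm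

theorem det_smul_one_sub_of_row_zero {R : Type*} [CommRing R] (A : Matrix (Fin 3) (Fin 3) R)
    (hA : ∀ j, A 0 j = 0) (lam : R) :
    (lam • (1 : Matrix (Fin 3) (Fin 3) R) - A).det
      = lam * (lam ^ 2 - (A 1 1 + A 2 2) * lam + (A 1 1 * A 2 2 - A 1 2 * A 2 1)) := by
  rw [det_fin_three]
  simp only [Matrix.sub_apply, Matrix.smul_apply, one_apply_eq, one_apply_ne, ne_eq, Fin.reduceEq,
    not_false_eq_true, smul_eq_mul, hA]
  ring

def rigidBodyField (a₁ a₂ a₃ : ℝ) (x : Fin 3 → ℝ) : Fin 3 → ℝ :=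
  ![(a₂ - a₃) * x 1 * x 2 + a₂ * (a₁ - a₂) * x 0 * (x 1)^2
      + a₃ * (a₁ - a₃) * x 0 * (x 2)^2,
    (a₃ - a₁) * x 0 * x 2 + a₃ * (a₂ - a₃) * x 1 * (x 2)^2
      + a₁ * (a₂ - a₁) * x 1 * (x 0)^2,
    (a₁ - a₂) * x 0 * x 1 + a₁ * (a₃ - a₁) * x 2 * (x 0)^2
      + a₂ * (a₃ - a₂) * x 2 * (x 1)^2]

theorem differentiable_rigidBodyField_apply (a₁ a₂ a₃ : ℝ) (i : Fin 3) :
    Differentiable ℝ (fun x => rigidBodyField a₁ a₂ a₃ x i) := by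
  fin_cases i <;>
    simp only [rigidBodyField, Fin.zero_eta, Fin.mk_one, Fin.reduceFinMk, cons_val_zero,
      cons_val_one, cons_val] <;>
    fun_prop

theorem jacobian_rigidBodyField (a₁ a₂ a₃ m : ℝ) :
    Matrix.of (fun i j => fderiv ℝ (fun x => rigidBodyField a₁ a₂ a₃ x i) ![m, 0, 0]
        (Pi.single j 1)) =
      !![0, 0, 0;
        0, a₁ * (a₂ - a₁) * m ^ 2, (a₃ - a₁) * m;
        0, (a₁ - a₂) * m, a₁ * (a₃ - a₁) * m ^ 2] := by
  ext i j
  rw [of_apply, fderiv_apply_single_eq_deriv_update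
    (differentiable_rigidBodyField_apply a₁ a₂ a₃ i _)]
  fin_cases i <;> fin_cases j <;> simp [rigidBodyField]

theorem revised_rigid_body_jacobian_at_M1 (a₁ a₂ a₃ m : ℝ) :
    let X : (Fin 3 → ℝ) → (Fin 3 → ℝ) := fun x =>
      ![(a₂ - a₃) * x 1 * x 2 + a₂ * (a₁ - a₂) * x 0 * (x 1)^2
          + a₃ * (a₁ - a₃) * x 0 * (x 2)^2,
        (a₃ - a₁) * x 0 * x 2 + a₃ * (a₂ - a₃) * x 1 * (x 2)^2
          + a₁ * (a₂ - a₁) * x 1 * (x 0)^2,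
        (a₁ - a₂) * x 0 * x 1 + a₁ * (a₃ - a₁) * x 2 * (x 0)^2
          + a₂ * (a₃ - a₂) * x 2 * (x 1)^2]
    let J : Matrix (Fin 3) (Fin 3) ℝ :=
      Matrix.of fun i j => fderiv ℝ (fun x => X x i) ![m, 0, 0] (Pi.single j 1)
    ∀ lam : ℝ, (lam • (1 : Matrix (Fin 3) (Fin 3) ℝ) - J).det
      = lam * (lam^2 - a₁ * (a₂ + a₃ - 2 * a₁) * m^2 * lam
          + (a₁ - a₃) * (a₁ - a₂) * m^2 * (a₁^2 * m^2 + 1)) := by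
  intro X J lam
  rw [show J = _ from jacobian_rigidBodyField a₁ a₂ a₃ m,
    det_smul_one_sub_of_row_zero _ (fun j => by fin_cases j <;> rfl)]
  simp only [of_apply, cons_val', cons_val_zero, cons_val_one, cons_val, cons_val_fin_one]
  ring
end
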